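/- arXiv:2412.04708 — 2 statements merged into one kernel-verified Lean document; each statement's English description precedes it below -/
import Mathlib

section
/- Let τ₁, τ₂, τ₃ ∈ ℂ∖{0} with τ₁τ₂τ₃ = e^{iλ}, Δⱼ = (τⱼ + τⱼ⁻¹)/2, 𝔇 = −(e^{−2iλ}/64)(τ₁−τ₂)²(τ₁−τ₃)²(τ₂−τ₃)², ϱ = (Δ₁−Δ₂)²(Δ₁−Δ₃)²(Δ₂−Δ₃)², and 𝔣 = ((τ₁+τ₂+τ₃) − (1/τ₁+1/τ₂+1/τ₃))/(2i) − sin λ. Then 4·𝔇·𝔣² = ϱ. -/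
set_option maxHeartbeats 2000000


open Complex

/-- With `Δⱼ = (τⱼ+τⱼ⁻¹)/2`, `𝔇` the modified discriminant,
`ϱ = (Δ₁-Δ₂)²(Δ₁-Δ₃)²(Δ₂-Δ₃)²` and `𝔣 = (T-T̃)/(2i) - sin z`,
one has `4𝔇𝔣² = ϱ`. -/
theorem stmt15 (τ₁ τ₂ τ₃ z : ℂ) (h₁ : τ₁ ≠ 0) (h₂ : τ₂ ≠ 0) (h₃ : τ₃ ≠ 0)
    (hprod : τ₁ * τ₂ * τ₃ = Complex.exp (Complex.I * z))
    (Δ₁ Δ₂ Δ₃ D ϱ f : ℂ)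
    (hΔ₁ : Δ₁ = (τ₁ + τ₁⁻¹) / 2) (hΔ₂ : Δ₂ = (τ₂ + τ₂⁻¹) / 2) (hΔ₃ : Δ₃ = (τ₃ + τ₃⁻¹) / 2)
    (hD : D = -(Complex.exp (-(2 * Complex.I * z)) / 64) *
      ((τ₁ - τ₂) ^ 2 * (τ₁ - τ₃) ^ 2 * (τ₂ - τ₃) ^ 2))
    (hϱ : ϱ = (Δ₁ - Δ₂) ^ 2 * (Δ₁ - Δ₃) ^ 2 * (Δ₂ - Δ₃) ^ 2)
    (hf : f = ((τ₁ + τ₂ + τ₃) - (1 / τ₁ + 1 / τ₂ + 1 / τ₃)) / (2 * Complex.I)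
      - Complex.sin z) :
    4 * D * f ^ 2 = ϱ := by
  have e1 : Complex.exp (z * Complex.I) = τ₁ * τ₂ * τ₃ := by rw [hprod, mul_comm z]
  have e2 : Complex.exp (-(z * Complex.I)) = (τ₁ * τ₂ * τ₃)⁻¹ := by
    rw [Complex.exp_neg, e1]
  have hexp2 : Complex.exp (-(2 * Complex.I * z)) = ((τ₁ * τ₂ * τ₃)⁻¹) ^ 2 := by
    have : -(2 * Complex.I * z) = -(z * Complex.I) + -(z * Complex.I) := by ring
    rw [this, Complex.exp_add, e2, sq]
  have hfg : f = ((τ₁ + τ₂ + τ₃) - (1 / τ₁ + 1 / τ₂ + 1 / τ₃)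
      - (τ₁ * τ₂ * τ₃ - (τ₁ * τ₂ * τ₃)⁻¹)) / (2 * Complex.I) := by
    rw [hf, Complex.sin, e1, show (-z * Complex.I) = -(z * Complex.I) by ring, e2]
    simp only [div_eq_mul_inv, mul_inv, Complex.inv_I]
    ring
  have hsq : (2 * Complex.I) ^ 2 = -4 := by
    rw [mul_pow, Complex.I_sq]; norm_num
  have hf2 : f ^ 2 = -(((τ₁ + τ₂ + τ₃) - (1 / τ₁ + 1 / τ₂ + 1 / τ₃)
      - (τ₁ * τ₂ * τ₃ - (τ₁ * τ₂ * τ₃)⁻¹)) ^ 2) / 4 := by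
    rw [hfg, div_pow, hsq]
    ring
  rw [hf2, hD, hexp2, hϱ, hΔ₁, hΔ₂, hΔ₃]
  field_simp
  ring
end

section
/- For n ≥ 1 let Gₙ = {t ∈ ℝⁿ : 0 < tₙ < tₙ₋₁ < ⋯ < t₁ < 1} and let uₙ(t) = t₁ − t₂ + ⋯ + (−1)^{n+1} tₙ be the alternating sum. Then for every ν > 0 and even n ≥ 4, the integral fₙ⁻ = ∫_{Gₙ} e^{−4ν uₙ(t)} dt satisfies fₙ⁻ ≤ (4ν)^{−n/2}, and for odd n ≥ 3, fₙ⁻ ≤ (4ν)^{−(n+1)/2}. -/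
/-! Drop every comparison of `Gₙ` except `t₂ < t₁, t₄ < t₃, …`. On the larger set the integrand
factors: each pair `(t₂ₖ₋₁, t₂ₖ)` contributes
`∫₀¹ ∫₀^{t₂ₖ₋₁} e^{-4ν(t₂ₖ₋₁ - t₂ₖ)} dt₂ₖ dt₂ₖ₋₁ ≤ 1/(4ν)`, and for odd `n` the unpaired last
coordinate contributes `∫₀¹ e^{-4νt} dt ≤ 1/(4ν)`. -/

open MeasureTheory Set
open scoped ENNReal

theorem measurable_fin_snoc {α : Type*} [MeasurableSpace α] {n : ℕ} :
    Measurable fun p : (Fin n → α) × α => (Fin.snoc p.1 p.2 : Fin (n + 1) → α) := by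
  convert (MeasurableEquiv.piFinSuccAbove (fun _ => α) (Fin.last n)).symm.measurable.comp
    measurable_swap using 1
  ext p : 1
  simp [MeasurableEquiv.piFinSuccAbove_symm_apply, Fin.insertNthEquiv, Fin.insertNth_last']

theorem MeasureTheory.lintegral_fin_snoc {α : Type*} [MeasureSpace α]
    [SigmaFinite (volume : Measure α)] {n : ℕ} {f : (Fin (n + 1) → α) → ℝ≥0∞}
    (hf : Measurable f) :
    ∫⁻ t, f t = ∫⁻ t : Fin n → α, ∫⁻ x, f (Fin.snoc t x) := by
  set e := (MeasurableEquiv.piFinSuccAbove (fun _ : Fin (n + 1) => α) (Fin.last n)).symm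
  have he : MeasurePreserving e := (volume_preserving_piFinSuccAbove _ _).symm
  rw [← he.lintegral_comp hf, Measure.volume_eq_prod, lintegral_prod_symm (fun p => f (e p))
    (hf.comp e.measurable).aemeasurable]
  simp only [e, MeasurableEquiv.piFinSuccAbove_symm_apply, Fin.insertNthEquiv, Equiv.coe_fn_mk,
    Fin.insertNth_last']

theorem lintegral_exp_mul_Ioi {a : ℝ} (ha : a < 0) (c : ℝ) :
    ∫⁻ x in Ioi c, ENNReal.ofReal (Real.exp (a * x)) =
      ENNReal.ofReal (-Real.exp (a * c) / a) := by
  rw [← integral_exp_mul_Ioi ha, ofReal_integral_eq_lintegral_ofReal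
    (integrableOn_exp_mul_Ioi ha c) (ae_of_all _ fun _ => (Real.exp_pos _).le)]

theorem lintegral_exp_mul_Iic {a : ℝ} (ha : 0 < a) (c : ℝ) :
    ∫⁻ x in Iic c, ENNReal.ofReal (Real.exp (a * x)) =
      ENNReal.ofReal (Real.exp (a * c) / a) := by
  rw [← integral_exp_mul_Iic ha, ofReal_integral_eq_lintegral_ofReal
    (integrableOn_exp_mul_Iic ha c) (ae_of_all _ fun _ => (Real.exp_pos _).le)]

namespace AlternatingSimplex

def altSum {n : ℕ} (t : Fin n → ℝ) : ℝ := ∑ i : Fin n, (-1 : ℝ) ^ (i : ℕ) * t i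

lemma altSum_snoc {m : ℕ} (t : Fin m → ℝ) (x : ℝ) :
    altSum (Fin.snoc t x : Fin (m + 1) → ℝ) = altSum t + (-1) ^ m * x := by
  simp [altSum, Fin.sum_univ_castSucc]

lemma measurable_altSum (n : ℕ) : Measurable (altSum : (Fin n → ℝ) → ℝ) :=
  Finset.measurable_sum _ fun i _ => (measurable_pi_apply i).const_mul _

def pairedCube (n : ℕ) : Set (Fin n → ℝ) :=
  {t | (∀ i, t i ∈ Ioo 0 1) ∧ ∀ i j : Fin n, Even (i : ℕ) → (j : ℕ) = i + 1 → t j < t i}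

lemma measurableSet_pairedCube (n : ℕ) : MeasurableSet (pairedCube n) := by
  simp only [pairedCube, ofPred_and, ofPred_forall]
  refine .inter (.iInter fun i => measurableSet_preimage (measurable_pi_apply i) measurableSet_Ioo)
    (.iInter fun i => .iInter fun j => .iInter fun _ => .iInter fun _ =>
      measurableSet_lt (measurable_pi_apply j) (measurable_pi_apply i))

lemma simplex_subset_pairedCube (n : ℕ) :
    {t : Fin n → ℝ | (∀ i, 0 < t i ∧ t i < 1) ∧ ∀ i j : Fin n, i < j → t j < t i} ⊆
      pairedCube n :=
  fun _ ⟨hI, hlt⟩ => ⟨hI, fun i j _ hj => hlt i j (by rw [Fin.lt_def]; omega)⟩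

lemma snoc_mem_pairedCube_iff {m : ℕ} (t : Fin m → ℝ) (x : ℝ) :
    Fin.snoc t x ∈ pairedCube (m + 1) ↔
      t ∈ pairedCube m ∧ x ∈ Ioo 0 1 ∧ ∀ i : Fin m, Even (i : ℕ) → (i : ℕ) + 1 = m → x < t i := by
  constructor
  · rintro ⟨hI, hlt⟩
    refine ⟨⟨fun i => by simpa using hI i.castSucc, fun i j hi hj => ?_⟩,
      by simpa using hI (Fin.last m),
      fun i hi hm => by simpa using hlt i.castSucc (Fin.last m) (by simpa using hi) (by simp [hm])⟩
    simpa using hlt i.castSucc j.castSucc (by simpa using hi) (by simpa using hj)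
  · rintro ⟨⟨hI, hlt⟩, hx, hxt⟩
    refine ⟨Fin.lastCases (by simpa using hx) (fun i => by simpa using hI i), fun i j hi hj => ?_⟩
    induction j using Fin.lastCases with
    | last =>
      induction i using Fin.lastCases with
      | last => simp at hj
      | cast i => simpa using hxt i (by simpa using hi) (by simpa using hj.symm)
    | cast j =>
      induction i using Fin.lastCases with
      | last => simp at hj; omega
      | cast i => simpa using hlt i j (by simpa using hi) (by simpa using hj)

lemma snoc_mem_pairedCube_iff_of_even {m : ℕ} (hm : Even m) (t : Fin m → ℝ) (x : ℝ) :
    Fin.snoc t x ∈ pairedCube (m + 1) ↔ t ∈ pairedCube m ∧ x ∈ Ioo 0 1 := by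
  rw [snoc_mem_pairedCube_iff]
  refine and_congr_right fun _ => and_iff_left fun i hi him => ?_
  exact absurd (him ▸ hm) (by simpa [Nat.even_add_one] using hi)

lemma snoc_snoc_mem_pairedCube_iff {m : ℕ} (hm : Even m) (t : Fin m → ℝ) (y x : ℝ) :
    Fin.snoc (Fin.snoc t y) x ∈ pairedCube (m + 2) ↔
      t ∈ pairedCube m ∧ y ∈ Ioo 0 1 ∧ x ∈ Ioo 0 y := by
  rw [snoc_mem_pairedCube_iff, snoc_mem_pairedCube_iff_of_even hm, Fin.forall_fin_succ']
  simp only [Fin.snoc_castSucc, Fin.snoc_last, Fin.val_last, Fin.val_castSucc, mem_Ioo]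
  have hno : ∀ i : Fin m, (i : ℕ) + 1 ≠ m + 1 := fun i => by omega
  constructor
  · rintro ⟨⟨ht, hy⟩, hx, -, hxy⟩
    exact ⟨ht, hy, hx.1, hxy hm trivial⟩
  · rintro ⟨ht, hy, hx⟩
    exact ⟨⟨ht, hy⟩, ⟨hx.1, hx.2.trans hy.2⟩, fun i _ h => absurd h (hno i), fun _ _ => hx.2⟩

variable {c : ℝ}

noncomputable def weight (c : ℝ) (n : ℕ) : (Fin n → ℝ) → ℝ≥0∞ :=
  (pairedCube n).indicator fun t => ENNReal.ofReal (Real.exp (-c * altSum t))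

lemma weight_snoc_of_even {m : ℕ} (hm : Even m) (t : Fin m → ℝ) (x : ℝ) :
    weight c (m + 1) (Fin.snoc t x) =
      weight c m t * (Ioo 0 1).indicator (fun x => ENNReal.ofReal (Real.exp (-c * x))) x := by
  have hmem := snoc_mem_pairedCube_iff_of_even hm t x
  by_cases h : t ∈ pairedCube m ∧ x ∈ Ioo 0 1
  · rw [weight, weight, indicator_of_mem (hmem.2 h), indicator_of_mem h.1, indicator_of_mem h.2,
      ← ENNReal.ofReal_mul (Real.exp_pos _).le, ← Real.exp_add, altSum_snoc, hm.neg_one_pow]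
    ring_nf
  · rw [weight, indicator_of_notMem (hmem.not.2 h)]
    rcases not_and_or.1 h with h | h <;> simp [weight, h]

/-- The contribution `e^{-c(y - x)}`, `0 < x < y < 1`, of a pair of coordinates to `weight`. -/
noncomputable def pairFactor (c y x : ℝ) : ℝ≥0∞ :=
  (Ioo 0 1).indicator (fun y => ENNReal.ofReal (Real.exp (-c * y))) y *
    (Ioo 0 y).indicator (fun x => ENNReal.ofReal (Real.exp (c * x))) x

lemma weight_snoc_snoc_of_even {m : ℕ} (hm : Even m) (t : Fin m → ℝ) (y x : ℝ) :
    weight c (m + 2) (Fin.snoc (Fin.snoc t y) x) = weight c m t * pairFactor c y x := by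
  have hmem := snoc_snoc_mem_pairedCube_iff hm t y x
  by_cases h : t ∈ pairedCube m ∧ y ∈ Ioo 0 1 ∧ x ∈ Ioo 0 y
  · rw [weight, weight, pairFactor, indicator_of_mem (hmem.2 h), indicator_of_mem h.1,
      indicator_of_mem h.2.1,
      indicator_of_mem h.2.2, ← ENNReal.ofReal_mul (Real.exp_pos _).le,
      ← ENNReal.ofReal_mul (Real.exp_pos _).le, ← Real.exp_add, ← Real.exp_add, altSum_snoc,
      altSum_snoc, hm.neg_one_pow, hm.add_one.neg_one_pow]
    ring_nf
  · rw [weight, indicator_of_notMem (hmem.not.2 h)]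
    rcases not_and_or.1 h with h | h
    · simp [weight, h]
    rcases not_and_or.1 h with h | h <;> simp [pairFactor, h]

lemma measurable_weight (c : ℝ) (n : ℕ) : Measurable (weight c n) :=
  ((measurable_altSum n).const_mul _).exp.ennreal_ofReal.indicator (measurableSet_pairedCube n)

lemma weight_ne_top (c : ℝ) (n : ℕ) (t : Fin n → ℝ) : weight c n t ≠ ∞ :=
  ((indicator_le_self _ _ t).trans_lt ENNReal.ofReal_lt_top).ne

lemma lintegral_weight_zero : ∫⁻ t, weight c 0 t = 1 := by
  rw [Measure.volume_pi_eq_dirac, lintegral_dirac]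
  simp [weight, altSum, pairedCube]

lemma lintegral_indicator_exp_neg_le (hc : 0 < c) :
    ∫⁻ x, (Ioo 0 1).indicator (fun x => ENNReal.ofReal (Real.exp (-c * x))) x ≤
      ENNReal.ofReal c⁻¹ :=
  calc _ = ∫⁻ x in Ioo 0 1, ENNReal.ofReal (Real.exp (-c * x)) :=
        lintegral_indicator measurableSet_Ioo _
    _ ≤ ∫⁻ x in Ioi 0, ENNReal.ofReal (Real.exp (-c * x)) := lintegral_mono_set Ioo_subset_Ioi_self
    _ = ENNReal.ofReal c⁻¹ := by rw [lintegral_exp_mul_Ioi (neg_lt_zero.2 hc)]; simp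

lemma lintegral_pairFactor_le (hc : 0 < c) :
    ∫⁻ y, ∫⁻ x, pairFactor c y x ≤ ENNReal.ofReal c⁻¹ := by
  have inner (y : ℝ) : ∫⁻ x, (Ioo 0 y).indicator (fun x => ENNReal.ofReal (Real.exp (c * x))) x ≤
      ENNReal.ofReal (Real.exp (c * y) / c) :=
    calc _ = ∫⁻ x in Ioo 0 y, ENNReal.ofReal (Real.exp (c * x)) :=
          lintegral_indicator measurableSet_Ioo _
      _ ≤ ∫⁻ x in Iic y, ENNReal.ofReal (Real.exp (c * x)) :=
          lintegral_mono_set fun x hx => le_of_lt hx.2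
      _ = _ := lintegral_exp_mul_Iic hc y
  calc _ = ∫⁻ y, (Ioo (0 : ℝ) 1).indicator (fun y => ENNReal.ofReal (Real.exp (-c * y))) y *
        ∫⁻ x, (Ioo 0 y).indicator (fun x => ENNReal.ofReal (Real.exp (c * x))) x :=
        lintegral_congr fun y => lintegral_const_mul' _ _
          (by by_cases hy : y ∈ Ioo (0 : ℝ) 1 <;> simp [hy])
    _ ≤ ∫⁻ y, (Ioo (0 : ℝ) 1).indicator (fun _ => ENNReal.ofReal c⁻¹) y := by
        refine lintegral_mono fun y => ?_
        by_cases hy : y ∈ Ioo 0 1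
        · rw [indicator_of_mem hy, indicator_of_mem hy]
          refine (mul_le_mul_right (inner y) _).trans_eq ?_
          rw [← ENNReal.ofReal_mul (Real.exp_pos _).le, mul_div_assoc', ← Real.exp_add]
          simp
        · simp [hy]
    _ = ENNReal.ofReal c⁻¹ := by simp [lintegral_indicator measurableSet_Ioo]

lemma lintegral_weight_succ_le {m : ℕ} (hm : Even m) (hc : 0 < c) :
    ∫⁻ t, weight c (m + 1) t ≤ (∫⁻ t, weight c m t) * ENNReal.ofReal c⁻¹ :=
  calc ∫⁻ t, weight c (m + 1) t = ∫⁻ t, weight c m t *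
        ∫⁻ x, (Ioo 0 1).indicator (fun x => ENNReal.ofReal (Real.exp (-c * x))) x := by
        rw [lintegral_fin_snoc (measurable_weight c _)]
        simp_rw [weight_snoc_of_even hm]
        exact lintegral_congr fun t => lintegral_const_mul' _ _ (weight_ne_top c m t)
    _ ≤ ∫⁻ t, weight c m t * ENNReal.ofReal c⁻¹ :=
        lintegral_mono fun t => mul_le_mul_right (lintegral_indicator_exp_neg_le hc) _
    _ = _ := lintegral_mul_const' _ _ ENNReal.ofReal_ne_top

lemma lintegral_weight_add_two_le {m : ℕ} (hm : Even m) (hc : 0 < c) :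
    ∫⁻ t, weight c (m + 2) t ≤ (∫⁻ t, weight c m t) * ENNReal.ofReal c⁻¹ :=
  calc ∫⁻ t, weight c (m + 2) t = ∫⁻ t, weight c m t * ∫⁻ y, ∫⁻ x, pairFactor c y x := by
        have hmeas : Measurable fun t : Fin (m + 1) → ℝ => ∫⁻ x, weight c (m + 2) (Fin.snoc t x) :=
          ((measurable_weight c _).comp measurable_fin_snoc).lintegral_prod_right'
        rw [lintegral_fin_snoc (measurable_weight c _), lintegral_fin_snoc hmeas]
        simp_rw [weight_snoc_snoc_of_even hm]
        refine lintegral_congr fun t => ?_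
        simp_rw [lintegral_const_mul' _ _ (weight_ne_top c m t)]
    _ ≤ ∫⁻ t, weight c m t * ENNReal.ofReal c⁻¹ :=
        lintegral_mono fun t => mul_le_mul_right (lintegral_pairFactor_le hc) _
    _ = _ := lintegral_mul_const' _ _ ENNReal.ofReal_ne_top

lemma lintegral_weight_two_mul_le (hc : 0 < c) (k : ℕ) :
    ∫⁻ t, weight c (2 * k) t ≤ ENNReal.ofReal c⁻¹ ^ k := by
  induction k with
  | zero => exact lintegral_weight_zero.le
  | succ k ih =>
    calc _ ≤ (∫⁻ t, weight c (2 * k) t) * ENNReal.ofReal c⁻¹ :=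
          lintegral_weight_add_two_le (even_two_mul k) hc
      _ ≤ _ := by rw [pow_succ]; gcongr

lemma lintegral_weight_two_mul_add_one_le (hc : 0 < c) (k : ℕ) :
    ∫⁻ t, weight c (2 * k + 1) t ≤ ENNReal.ofReal c⁻¹ ^ (k + 1) :=
  calc _ ≤ (∫⁻ t, weight c (2 * k) t) * ENNReal.ofReal c⁻¹ :=
        lintegral_weight_succ_le (even_two_mul k) hc
    _ ≤ _ := by rw [pow_succ]; gcongr; exact lintegral_weight_two_mul_le hc k

lemma setIntegral_exp_neg_mul_altSum_le {n : ℕ} {G : Set (Fin n → ℝ)} (hG : G ⊆ pairedCube n)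
    {B : ℝ} (hB : 0 ≤ B) (h : ∫⁻ t, weight c n t ≤ ENNReal.ofReal B) :
    ∫ t in G, Real.exp (-c * altSum t) ≤ B := by
  rw [integral_eq_lintegral_of_nonneg_ae (ae_of_all _ fun _ => (Real.exp_pos _).le)
    ((measurable_altSum n).const_mul _).exp.aestronglyMeasurable]
  refine ENNReal.toReal_le_of_le_ofReal hB ?_
  calc _ ≤ ∫⁻ t in pairedCube n, ENNReal.ofReal (Real.exp (-c * altSum t)) := lintegral_mono_set hG
    _ = ∫⁻ t, weight c n t := (lintegral_indicator (measurableSet_pairedCube n) _).symm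
    _ ≤ _ := h

end AlternatingSimplex

open AlternatingSimplex in
theorem stmt19_general (n : ℕ) (ν : ℝ) (hν : 0 < ν)
    (G : Set (Fin n → ℝ))
    (hG : G = {t : Fin n → ℝ | (∀ i, 0 < t i ∧ t i < 1) ∧
      ∀ i j : Fin n, i < j → t j < t i})
    (u : (Fin n → ℝ) → ℝ)
    (hu : u = fun t => ∑ i : Fin n, (-1 : ℝ) ^ (i : ℕ) * t i) :
    (4 ≤ n → Even n →
      ∫ t in G, Real.exp (-(4 * ν) * u t) ≤ (4 * ν) ^ (-(n : ℝ) / 2)) ∧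
    (3 ≤ n → Odd n →
      ∫ t in G, Real.exp (-(4 * ν) * u t) ≤ (4 * ν) ^ (-((n : ℝ) + 1) / 2)) := by
  have hc : 0 < 4 * ν := by positivity
  have hGP : G ⊆ pairedCube n := hG ▸ simplex_subset_pairedCube n
  have hu' : u = altSum := hu
  have hle {m : ℕ} (hm : ∫⁻ t, weight (4 * ν) n t ≤ ENNReal.ofReal (4 * ν)⁻¹ ^ m) :
      ∫ t in G, Real.exp (-(4 * ν) * u t) ≤ (4 * ν) ^ (-(m : ℝ)) := by
    rw [hu', Real.rpow_neg hc.le, Real.rpow_natCast, ← inv_pow]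
    exact setIntegral_exp_neg_mul_altSum_le hGP (by positivity)
      (by rwa [ENNReal.ofReal_pow (by positivity)])
  refine ⟨fun _ he => ?_, fun _ ho => ?_⟩
  · obtain ⟨k, rfl⟩ := even_iff_two_dvd.1 he
    convert hle (lintegral_weight_two_mul_le hc k) using 2
    push_cast; ring
  · obtain ⟨k, rfl⟩ := ho
    convert hle (lintegral_weight_two_mul_add_one_le hc k) using 2
    push_cast; ring

/-- With `Gₙ` the open simplex `0 < tₙ < ⋯ < t₁ < 1` and
`uₙ(t) = t₁ - t₂ + ⋯ + (-1)^{n+1} tₙ`, for every `ν > 0` the integral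
`fₙ⁻ = ∫_{Gₙ} e^{-4ν uₙ(t)} dt` satisfies `fₙ⁻ ≤ (4ν)^{-n/2}` for even `n ≥ 4`
and `fₙ⁻ ≤ (4ν)^{-(n+1)/2}` for odd `n ≥ 3`. -/
theorem stmt19 (n : ℕ) (hn1 : 1 ≤ n) (ν : ℝ) (hν : 0 < ν)
    (G : Set (Fin n → ℝ))
    (hG : G = {t : Fin n → ℝ | (∀ i, 0 < t i ∧ t i < 1) ∧
      ∀ i j : Fin n, i < j → t j < t i})
    (u : (Fin n → ℝ) → ℝ)
    (hu : u = fun t => ∑ i : Fin n, (-1 : ℝ) ^ (i : ℕ) * t i) :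
    (4 ≤ n → Even n →
      ∫ t in G, Real.exp (-(4 * ν) * u t) ≤ (4 * ν) ^ (-(n : ℝ) / 2)) ∧
    (3 ≤ n → Odd n →
      ∫ t in G, Real.exp (-(4 * ν) * u t) ≤ (4 * ν) ^ (-((n : ℝ) + 1) / 2)) :=
  stmt19_general n ν hν G hG u hu
end
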